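/- If φ : ℝ^n → ℝ is a nonnegative C² function with ∫_{ℝ^n} φ ≤ 1 and ∫_{ℝ^n} φ|∇φ|² < ∞, then (∫_{ℝ^n} |∇φ|²)² ≤ ∫_{ℝ^n} φ|Δφ|². -/

import Mathlib

open MeasureTheory

noncomputable def laplacian {n : ℕ} (φ : EuclideanSpace ℝ (Fin n) → ℝ)
    (x : EuclideanSpace ℝ (Fin n)) : ℝ :=
  ∑ i : Fin n, fderiv ℝ (fun y => fderiv ℝ φ y (EuclideanSpace.single i 1)) x
    (EuclideanSpace.single i 1)

/-!
By Cauchy–Schwarz with weight `φ`, `(∫ φ |Δφ|)² ≤ ∫ φ · ∫ φ |Δφ|² ≤ ∫ φ |Δφ|²`, so it suffices to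
show `∫ |∇φ|² ≤ ∫ φ |Δφ|`. Formally this is the integration by parts
`|∇φ|² = div (φ ∇φ) - φ Δφ`. To justify it, integrate `div (φ χₖ ∇φ) = 0` for the cutoffs
`χₖ x = θ (x / (k + 1))`: the extra term `φ ⟪∇χₖ, ∇φ⟫` is `O(1 / k) · φ |∇φ|`, and
`φ |∇φ| ≤ φ + φ |∇φ|²` is integrable; Fatou's lemma then lets `k → ∞`.
-/

open Filter Topology

section Lebesgue

variable {α : Type*} [MeasurableSpace α] {μ : Measure α}

lemma lintegral_mul_abs_sq_le {w h : α → ℝ} (hw : ∀ x, 0 ≤ w x) (hwm : AEMeasurable w μ)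
    (hhm : AEMeasurable h μ) :
    (∫⁻ x, ENNReal.ofReal (w x * |h x|) ∂μ) ^ 2
      ≤ (∫⁻ x, ENNReal.ofReal (w x) ∂μ) * ∫⁻ x, ENNReal.ofReal (w x * h x ^ 2) ∂μ := by
  have holder := ENNReal.lintegral_mul_norm_pow_le (μ := μ)
    (f := fun x => ENNReal.ofReal (w x)) (g := fun x => ENNReal.ofReal (w x * h x ^ 2))
    hwm.ennreal_ofReal (hwm.mul (hhm.pow_const 2)).ennreal_ofReal (p := 1 / 2) (q := 1 / 2)
    (by norm_num) (by norm_num) (by norm_num)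
  have sqrt_mul : ∀ x, ENNReal.ofReal (w x) ^ (1 / 2 : ℝ)
      * ENNReal.ofReal (w x * h x ^ 2) ^ (1 / 2 : ℝ) = ENNReal.ofReal (w x * |h x|) := by
    intro x
    have hwx := hw x
    rw [ENNReal.ofReal_rpow_of_nonneg hwx (by norm_num),
      ENNReal.ofReal_rpow_of_nonneg (by positivity) (by norm_num),
      ← ENNReal.ofReal_mul (by positivity), ← Real.mul_rpow hwx (by positivity),
      ← Real.sqrt_eq_rpow, show w x * (w x * h x ^ 2) = (w x * |h x|) ^ 2 by
        rw [mul_pow, sq_abs]; ring, Real.sqrt_sq (by positivity)]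
  have sq_rpow_half_mul (A B : ENNReal) : (A ^ (1 / 2 : ℝ) * B ^ (1 / 2 : ℝ)) ^ 2 = A * B := by
    rw [mul_pow, ← ENNReal.rpow_two, ← ENNReal.rpow_two, ← ENNReal.rpow_mul, ← ENNReal.rpow_mul]
    norm_num
  rw [← sq_rpow_half_mul, ← lintegral_congr sqrt_mul]
  gcongr

lemma lintegral_le_of_tendsto_of_lintegral_le {ι : Type*} {u : Filter ι} [u.NeBot]
    [u.IsCountablyGenerated] {f : α → ENNReal} {g : ι → α → ENNReal} {c : ι → ENNReal}
    {a : ENNReal} (hg : ∀ k, AEMeasurable (g k) μ)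
    (hgf : ∀ᵐ x ∂μ, Tendsto (fun k => g k x) u (𝓝 (f x)))
    (hgc : ∀ k, ∫⁻ x, g k x ∂μ ≤ c k) (hc : Tendsto c u (𝓝 a)) :
    ∫⁻ x, f x ∂μ ≤ a :=
  calc ∫⁻ x, f x ∂μ = ∫⁻ x, liminf (fun k => g k x) u ∂μ :=
        lintegral_congr_ae (hgf.mono fun _ hx => hx.liminf_eq.symm)
    _ ≤ liminf (fun k => ∫⁻ x, g k x ∂μ) u := lintegral_liminf_le' hg
    _ ≤ liminf c u := liminf_le_liminf (Eventually.of_forall hgc)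
    _ = a := hc.liminf_eq

lemma integrable_of_lintegral_ofReal_lt_top {f : α → ℝ} (hf : AEStronglyMeasurable f μ)
    (hf0 : ∀ x, 0 ≤ f x) (hfin : ∫⁻ x, ENNReal.ofReal (f x) ∂μ < ⊤) : Integrable f μ :=
  ⟨hf, (hasFiniteIntegral_iff_ofReal (ae_of_all _ hf0)).2 hfin⟩

lemma neg_integral_le_integral_of_abs_le {f g : α → ℝ} (hf : AEStronglyMeasurable f μ)
    (hg : Integrable g μ) (hfg : ∀ x, |f x| ≤ g x) : -∫ x, f x ∂μ ≤ ∫ x, g x ∂μ := by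
  have hfi : Integrable f μ := hg.mono' hf (ae_of_all _ hfg)
  rw [← integral_neg]
  exact integral_mono hfi.neg hg fun x => (neg_le_abs _).trans (hfg x)

end Lebesgue

section Cutoff

variable {E : Type*} [NormedAddCommGroup E] [NormedSpace ℝ E] [HasContDiffBump E]

noncomputable def cutoff (θ : ContDiffBump (0 : E)) (k : ℕ) (x : E) : ℝ :=
  θ ((1 / ((k : ℝ) + 1)) • x)

variable (θ : ContDiffBump (0 : E))

lemma contDiff_cutoff (k : ℕ) : ContDiff ℝ 1 (cutoff θ k) :=
  θ.contDiff.comp (contDiff_const_smul _)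

lemma hasCompactSupport_cutoff [FiniteDimensional ℝ E] (k : ℕ) :
    HasCompactSupport (cutoff θ k) :=
  θ.hasCompactSupport.comp_smul (one_div_ne_zero (Nat.cast_add_one_ne_zero k))

lemma cutoff_nonneg (k : ℕ) (x : E) : 0 ≤ cutoff θ k x := θ.nonneg

lemma cutoff_le_one (k : ℕ) (x : E) : cutoff θ k x ≤ 1 := θ.le_one

lemma tendsto_cutoff (x : E) : Tendsto (fun k => cutoff θ k x) atTop (𝓝 1) := by
  have hscale : Tendsto (fun k : ℕ => (1 / ((k : ℝ) + 1)) • x) atTop (𝓝 0) := by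
    simpa using (tendsto_one_div_add_atTop_nhds_zero_nat (𝕜 := ℝ)).smul_const x
  have hθ0 : θ 0 = 1 := θ.one_of_mem_closedBall (Metric.mem_closedBall_self θ.rIn_pos.le)
  exact hθ0 ▸ θ.continuous.continuousAt.tendsto.comp hscale

lemma exists_norm_fderiv_cutoff_le [FiniteDimensional ℝ E] :
    ∃ C : ℝ, ∀ k x, ‖fderiv ℝ (cutoff θ k) x‖ ≤ C * (1 / ((k : ℝ) + 1)) := by
  obtain ⟨C, hC⟩ := θ.contDiff.lipschitzWith_of_hasCompactSupport θ.hasCompactSupport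
    (n := 1) one_ne_zero
  refine ⟨C, fun k x => ?_⟩
  have hlip : LipschitzWith (C * ‖1 / ((k : ℝ) + 1)‖₊) (cutoff θ k) :=
    hC.comp (lipschitzWith_smul _)
  have hpos : (0 : ℝ) < (k : ℝ) + 1 := by positivity
  simpa [abs_of_pos hpos] using norm_fderiv_le_of_lipschitz ℝ hlip (x₀ := x)

end Cutoff

lemma integral_fderiv_apply_eq_zero {E : Type*} [NormedAddCommGroup E] [NormedSpace ℝ E]
    [FiniteDimensional ℝ E] [MeasurableSpace E] [BorelSpace E] {μ : Measure E}
    [μ.IsAddHaarMeasure] {g : E → ℝ} (hg : ContDiff ℝ 1 g) (h'g : HasCompactSupport g) (v : E) :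
    ∫ x, fderiv ℝ g x v ∂μ = 0 := by
  simpa using integral_mul_fderiv_eq_neg_fderiv_mul_of_integrable (μ := μ)
    (f := fun _ => (1 : ℝ)) (g := g) (v := v) (by simp)
    (by simpa using ((hg.continuous_fderiv one_ne_zero).clm_apply
      continuous_const).integrable_of_hasCompactSupport (h'g.fderiv_apply ℝ v))
    (by simpa using hg.continuous.integrable_of_hasCompactSupport h'g)
    (fun _ _ => differentiableAt_const _)
    (fun _ _ => (hg.differentiable one_ne_zero).differentiableAt)

section Euclidean

variable {n : ℕ}

lemma gradient_apply_eq_fderiv_single (f : EuclideanSpace ℝ (Fin n) → ℝ)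
    (x : EuclideanSpace ℝ (Fin n)) (i : Fin n) :
    gradient f x i = fderiv ℝ f x (EuclideanSpace.single i 1) := by
  rw [← inner_gradient_left, EuclideanSpace.inner_single_right]
  simp

lemma sum_fderiv_single_mul_fderiv_single (f g : EuclideanSpace ℝ (Fin n) → ℝ)
    (x : EuclideanSpace ℝ (Fin n)) :
    ∑ i, fderiv ℝ f x (EuclideanSpace.single i 1) * fderiv ℝ g x (EuclideanSpace.single i 1)
      = fderiv ℝ g x (gradient f x) := by
  rw [← inner_gradient_left, PiLp.inner_apply]
  simp [gradient_apply_eq_fderiv_single]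

lemma norm_gradient_sq_eq_sum (f : EuclideanSpace ℝ (Fin n) → ℝ) (x : EuclideanSpace ℝ (Fin n)) :
    ‖gradient f x‖ ^ 2 = ∑ i, fderiv ℝ f x (EuclideanSpace.single i 1) ^ 2 := by
  simp_rw [sq, sum_fderiv_single_mul_fderiv_single, ← inner_gradient_left,
    real_inner_self_eq_norm_mul_norm]

lemma ContDiff.continuous_gradient {F : Type*} [NormedAddCommGroup F] [InnerProductSpace ℝ F]
    [CompleteSpace F] {f : F → ℝ} (hf : ContDiff ℝ 1 f) : Continuous (gradient f) :=
  (InnerProductSpace.toDual ℝ F).symm.continuous.comp (hf.continuous_fderiv one_ne_zero)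

lemma ContDiff.contDiff_fderiv_apply_const {F : Type*} [NormedAddCommGroup F] [NormedSpace ℝ F]
    {f : F → ℝ} (hf : ContDiff ℝ 2 f) (v : F) : ContDiff ℝ 1 (fun y => fderiv ℝ f y v) :=
  (hf.fderiv_right one_add_one_eq_two.le).clm_apply contDiff_const

lemma ContDiff.continuous_laplacian {φ : EuclideanSpace ℝ (Fin n) → ℝ} (hφ : ContDiff ℝ 2 φ) :
    Continuous (laplacian φ) :=
  continuous_finsetSum _ fun _ _ =>
    ((hφ.contDiff_fderiv_apply_const _).continuous_fderiv one_ne_zero).clm_apply continuous_const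

/-- The divergence of `φ χ ∇φ`. -/
lemma sum_fderiv_single_mul_fderiv_single_mul {φ χ : EuclideanSpace ℝ (Fin n) → ℝ}
    (hφ : ContDiff ℝ 2 φ) (hχ : ContDiff ℝ 1 χ) (x : EuclideanSpace ℝ (Fin n)) :
    ∑ i, fderiv ℝ (fun y => φ y * fderiv ℝ φ y (EuclideanSpace.single i 1) * χ y) x
        (EuclideanSpace.single i 1)
      = ‖gradient φ x‖ ^ 2 * χ x + φ x * laplacian φ x * χ x
        + φ x * fderiv ℝ χ x (gradient φ x) := by
  have product_rule (i : Fin n) :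
      fderiv ℝ (fun y => φ y * fderiv ℝ φ y (EuclideanSpace.single i 1) * χ y) x
          (EuclideanSpace.single i 1)
        = fderiv ℝ φ x (EuclideanSpace.single i 1) ^ 2 * χ x
          + φ x * fderiv ℝ (fun y => fderiv ℝ φ y (EuclideanSpace.single i 1)) x
              (EuclideanSpace.single i 1) * χ x
          + φ x * (fderiv ℝ φ x (EuclideanSpace.single i 1)
              * fderiv ℝ χ x (EuclideanSpace.single i 1)) := by
    have hφx := (hφ.differentiable two_ne_zero).differentiableAt (x := x)
    have hDφx := ((hφ.contDiff_fderiv_apply_const (EuclideanSpace.single i 1)).differentiable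
      one_ne_zero).differentiableAt (x := x)
    have hχx := (hχ.differentiable one_ne_zero).differentiableAt (x := x)
    rw [fderiv_fun_mul (hφx.fun_mul hDφx) hχx, fderiv_fun_mul hφx hDφx]
    simp only [add_apply, smul_apply, smul_eq_mul]
    ring
  simp only [product_rule, Finset.sum_add_distrib, ← Finset.sum_mul, ← Finset.mul_sum,
    ← norm_gradient_sq_eq_sum, sum_fderiv_single_mul_fderiv_single, laplacian]

lemma integral_norm_gradient_sq_mul_eq {φ χ : EuclideanSpace ℝ (Fin n) → ℝ}
    (hφ : ContDiff ℝ 2 φ) (hχ : ContDiff ℝ 1 χ) (hχc : HasCompactSupport χ) :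
    ∫ x, ‖gradient φ x‖ ^ 2 * χ x
      = -(∫ x, φ x * laplacian φ x * χ x) - ∫ x, φ x * fderiv ℝ χ x (gradient φ x) := by
  have hφ1 : ContDiff ℝ 1 φ := hφ.of_le one_le_two
  have hdivergence : ∫ x, ∑ i, fderiv ℝ
      (fun y => φ y * fderiv ℝ φ y (EuclideanSpace.single i 1) * χ y) x
        (EuclideanSpace.single i 1) = 0 := by
    have hC1 (i : Fin n) : ContDiff ℝ 1
        (fun y => φ y * fderiv ℝ φ y (EuclideanSpace.single i 1) * χ y) :=
      (hφ1.mul (hφ.contDiff_fderiv_apply_const _)).mul hχ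
    have hcpt (i : Fin n) : HasCompactSupport
        (fun y => φ y * fderiv ℝ φ y (EuclideanSpace.single i 1) * χ y) := hχc.mul_left
    rw [integral_finsetSum _ fun i _ => (((hC1 i).continuous_fderiv one_ne_zero).clm_apply
      continuous_const).integrable_of_hasCompactSupport ((hcpt i).fderiv_apply ℝ _)]
    exact Finset.sum_eq_zero fun i _ => integral_fderiv_apply_eq_zero (hC1 i) (hcpt i) _
  have hgrad := hφ1.continuous_gradient
  have hint₁ : Integrable (fun x => ‖gradient φ x‖ ^ 2 * χ x) :=
    ((hgrad.norm.pow 2).mul hχ.continuous).integrable_of_hasCompactSupport hχc.mul_left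
  have hint₂ : Integrable (fun x => φ x * laplacian φ x * χ x) :=
    ((hφ.continuous.mul hφ.continuous_laplacian).mul hχ.continuous).integrable_of_hasCompactSupport
      hχc.mul_left
  have hint₃ : Integrable (fun x => φ x * fderiv ℝ χ x (gradient φ x)) := by
    have hcont := hφ.continuous.mul ((hχ.continuous_fderiv one_ne_zero).clm_apply hgrad)
    refine hcont.integrable_of_hasCompactSupport ((hχc.fderiv ℝ).mono ?_)
    exact Function.support_subset_iff'.2 fun x hx => by simp [Function.notMem_support.1 hx]
  have hint₁₂ : Integrable (fun x => ‖gradient φ x‖ ^ 2 * χ x + φ x * laplacian φ x * χ x) :=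
    hint₁.add hint₂
  simp only [sum_fderiv_single_mul_fderiv_single_mul hφ hχ] at hdivergence
  rw [integral_add hint₁₂ hint₃, integral_add hint₁ hint₂] at hdivergence
  linarith

lemma integral_norm_gradient_sq_mul_le {φ χ : EuclideanSpace ℝ (Fin n) → ℝ}
    (hφ : ContDiff ℝ 2 φ) (hφ0 : ∀ x, 0 ≤ φ x) (hχ : ContDiff ℝ 1 χ) (hχc : HasCompactSupport χ)
    (hχ0 : ∀ x, 0 ≤ χ x) (hχ1 : ∀ x, χ x ≤ 1) {L : ℝ} (hL : ∀ x, ‖fderiv ℝ χ x‖ ≤ L)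
    (hΔ : Integrable fun x => φ x * |laplacian φ x|)
    (hgrad : Integrable fun x => φ x * ‖gradient φ x‖) :
    ∫ x, ‖gradient φ x‖ ^ 2 * χ x
      ≤ (∫ x, φ x * |laplacian φ x|) + L * ∫ x, φ x * ‖gradient φ x‖ := by
  have hgradc := (hφ.of_le one_le_two).continuous_gradient
  rw [integral_norm_gradient_sq_mul_eq hφ hχ hχc, sub_eq_add_neg, ← integral_const_mul]
  gcongr
  · refine neg_integral_le_integral_of_abs_le ((hφ.continuous.mul
      hφ.continuous_laplacian).mul hχ.continuous).aestronglyMeasurable hΔ fun x => ?_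
    rw [abs_mul, abs_mul, abs_of_nonneg (hφ0 x), abs_of_nonneg (hχ0 x)]
    exact mul_le_of_le_one_right (by have := hφ0 x; positivity) (hχ1 x)
  · refine neg_integral_le_integral_of_abs_le (hφ.continuous.mul ((hχ.continuous_fderiv
      one_ne_zero).clm_apply hgradc)).aestronglyMeasurable (hgrad.const_mul L) fun x => ?_
    rw [abs_mul, abs_of_nonneg (hφ0 x), mul_left_comm]
    gcongr
    · exact hφ0 x
    · exact ((fderiv ℝ χ x).le_opNorm _).trans (by gcongr; exact hL x)

lemma lintegral_norm_gradient_sq_le {φ : EuclideanSpace ℝ (Fin n) → ℝ} (hφ : ContDiff ℝ 2 φ)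
    (hφ0 : ∀ x, 0 ≤ φ x) (hφi : Integrable φ)
    (hgrad : Integrable fun x => φ x * ‖gradient φ x‖ ^ 2) :
    ∫⁻ x, ENNReal.ofReal (‖gradient φ x‖ ^ 2) ≤ ∫⁻ x, ENNReal.ofReal (φ x * |laplacian φ x|) := by
  have hΔ0 (x : EuclideanSpace ℝ (Fin n)) : 0 ≤ φ x * |laplacian φ x| :=
    mul_nonneg (hφ0 x) (abs_nonneg _)
  rcases eq_or_ne (∫⁻ x, ENNReal.ofReal (φ x * |laplacian φ x|)) ⊤ with hI | hI
  · exact hI ▸ le_top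
  have hgradc := (hφ.of_le one_le_two).continuous_gradient
  have hΔ : Integrable fun x => φ x * |laplacian φ x| :=
    integrable_of_lintegral_ofReal_lt_top
      (hφ.continuous.mul hφ.continuous_laplacian.abs).aestronglyMeasurable hΔ0 hI.lt_top
  have hgrad' : Integrable fun x => φ x * ‖gradient φ x‖ :=
    (hφi.add hgrad).mono' (hφ.continuous.mul hgradc.norm).aestronglyMeasurable
      (ae_of_all _ fun x => by
        have := hφ0 x
        rw [norm_mul, Real.norm_of_nonneg this, norm_norm, Pi.add_apply]
        nlinarith [mul_nonneg this (sq_nonneg (‖gradient φ x‖ - 1)),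
          mul_nonneg this (norm_nonneg (gradient φ x))])
  let θ : ContDiffBump (0 : EuclideanSpace ℝ (Fin n)) := ⟨1, 2, one_pos, one_lt_two⟩
  obtain ⟨C, hC⟩ := exists_norm_fderiv_cutoff_le θ
  rw [← ofReal_integral_eq_lintegral_ofReal hΔ (ae_of_all _ hΔ0)]
  refine lintegral_le_of_tendsto_of_lintegral_le (u := atTop)
    (g := fun k x => ENNReal.ofReal (‖gradient φ x‖ ^ 2 * cutoff θ k x))
    (c := fun k => ENNReal.ofReal ((∫ x, φ x * |laplacian φ x|)
      + C * (1 / ((k : ℝ) + 1)) * ∫ x, φ x * ‖gradient φ x‖))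
    (fun k =>
      ((hgradc.norm.pow 2).mul (contDiff_cutoff θ k).continuous).aemeasurable.ennreal_ofReal)
    (ae_of_all _ fun x => ENNReal.tendsto_ofReal (by
      simpa using (tendsto_cutoff θ x).const_mul (‖gradient φ x‖ ^ 2)))
    (fun k => ?_) (ENNReal.tendsto_ofReal (by
      simpa using ((tendsto_one_div_add_atTop_nhds_zero_nat.const_mul C).mul_const
        (∫ x, φ x * ‖gradient φ x‖)).const_add (∫ x, φ x * |laplacian φ x|)))
  have hint : Integrable fun x => ‖gradient φ x‖ ^ 2 * cutoff θ k x :=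
    ((hgradc.norm.pow 2).mul (contDiff_cutoff θ k).continuous).integrable_of_hasCompactSupport
      (hasCompactSupport_cutoff θ k).mul_left
  rw [← ofReal_integral_eq_lintegral_ofReal hint
    (ae_of_all _ fun x => mul_nonneg (sq_nonneg _) (cutoff_nonneg θ k x))]
  exact ENNReal.ofReal_le_ofReal (integral_norm_gradient_sq_mul_le hφ hφ0 (contDiff_cutoff θ k)
    (hasCompactSupport_cutoff θ k) (cutoff_nonneg θ k) (cutoff_le_one θ k) (hC k) hΔ hgrad')

end Euclidean

theorem stmt_0_general (n : ℕ) (φ : EuclideanSpace ℝ (Fin n) → ℝ)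
    (hφreg : ContDiff ℝ 2 φ) (hφnonneg : ∀ x, 0 ≤ φ x)
    (hmass : ∫⁻ x, ENNReal.ofReal (φ x) ≤ 1)
    (hfin : ∫⁻ x, ENNReal.ofReal (φ x * ‖gradient φ x‖ ^ 2) < ⊤) :
    (∫⁻ x, ENNReal.ofReal (‖gradient φ x‖ ^ 2)) ^ 2
      ≤ ∫⁻ x, ENNReal.ofReal (φ x * (laplacian φ x) ^ 2) := by
  have hgradc := (hφreg.of_le one_le_two).continuous_gradient
  have hφi : Integrable φ := integrable_of_lintegral_ofReal_lt_top
    hφreg.continuous.aestronglyMeasurable hφnonneg (hmass.trans_lt ENNReal.one_lt_top)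
  have hgrad : Integrable fun x => φ x * ‖gradient φ x‖ ^ 2 := integrable_of_lintegral_ofReal_lt_top
    (hφreg.continuous.mul (hgradc.norm.pow 2)).aestronglyMeasurable
    (fun x => mul_nonneg (hφnonneg x) (sq_nonneg _)) hfin
  calc (∫⁻ x, ENNReal.ofReal (‖gradient φ x‖ ^ 2)) ^ 2
      ≤ (∫⁻ x, ENNReal.ofReal (φ x * |laplacian φ x|)) ^ 2 :=
        pow_le_pow_left₀ zero_le (lintegral_norm_gradient_sq_le hφreg hφnonneg hφi hgrad) 2
    _ ≤ (∫⁻ x, ENNReal.ofReal (φ x)) * ∫⁻ x, ENNReal.ofReal (φ x * laplacian φ x ^ 2) :=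
        lintegral_mul_abs_sq_le hφnonneg hφreg.continuous.aemeasurable
          hφreg.continuous_laplacian.aemeasurable
    _ ≤ ∫⁻ x, ENNReal.ofReal (φ x * laplacian φ x ^ 2) := mul_le_of_le_one_left' hmass

theorem stmt_0 (n : ℕ) (hn : 1 ≤ n) (φ : EuclideanSpace ℝ (Fin n) → ℝ)
    (hφreg : ContDiff ℝ 2 φ) (hφnonneg : ∀ x, 0 ≤ φ x)
    (hmass : ∫⁻ x, ENNReal.ofReal (φ x) ≤ 1)
    (hfin : ∫⁻ x, ENNReal.ofReal (φ x * ‖gradient φ x‖ ^ 2) < ⊤) :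
    (∫⁻ x, ENNReal.ofReal (‖gradient φ x‖ ^ 2)) ^ 2
      ≤ ∫⁻ x, ENNReal.ofReal (φ x * (laplacian φ x) ^ 2) :=
  stmt_0_general n φ hφreg hφnonneg hmass hfin
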